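/- arXiv:2110.00134 — 2 statements merged into one kernel-verified Lean document; each statement's English description precedes it below -/
import Mathlib

section
/- Let 0 < α < 1, 𝔼 > 0, let 0 ≤ τ₁ < τ₂ < ... < τ_m be step application times with strain increments Δε₁, ..., Δε_m ∈ ℝ, and fix t > τ_m. For small δ > 0 (δ less than all gaps τ_{i+1} − τ_i and than t − τ_m) define ε_δ(s) = Σ_{i=1}^m Δε_i · r((s − τ_i)/δ), where r(x) = 0 for x ≤ 0, r(x) = x for 0 ≤ x ≤ 1, and r(x) = 1 for x ≥ 1. Then lim_{δ→0⁺} (𝔼/Γ(1−α)) ∫₀ᵗ ε_δ'(s)(t−s)^(−α) ds = Σ_{i=1}^m Δε_i · 𝔼 (t−τ_i)^(−α)/Γ(1−α); i.e., the Scott–Blair stress under consecutive step strains is the Boltzmann superposition of the relaxation responses G^SB(t−τ_i). -/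
/-!
Away from its two kinks the ramp `s ↦ r((s - τ) / δ)` has derivative `δ⁻¹ · 1_(τ, τ + δ)`.
Hence, once `δ` is below every gap `t - τᵢ`, the stress integral equals `Σ Δεᵢ` times the mean of
the kernel `(t - s) ^ (-α)` over `(τᵢ, τᵢ + δ)`, a window that stays away from the singularity at
`s = t`. Since the kernel is continuous on `(-∞, t)`, the fundamental theorem of calculus makes
these means converge to `(t - τᵢ) ^ (-α)` as `δ → 0⁺`.
-/

open MeasureTheory Set Filter Topology

noncomputable def ramp (a δ x : ℝ) : ℝ := max 0 (min 1 ((x - a) / δ))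

theorem hasDerivAt_ramp {a δ x : ℝ} (hδ : 0 < δ) (hxa : x ≠ a) (hxb : x ≠ a + δ) :
    HasDerivAt (ramp a δ) ((Ioo a (a + δ)).indicator (fun _ => δ⁻¹) x) x := by
  rcases hxa.lt_or_gt with hx | hx
  · rw [indicator_of_notMem (fun h => hx.not_gt h.1)]
    refine (hasDerivAt_const x 0).congr_of_eventuallyEq ?_
    filter_upwards [Iio_mem_nhds hx] with y (hy : y < a)
    have : (y - a) / δ ≤ 0 := div_nonpos_of_nonpos_of_nonneg (by linarith) hδ.le
    simp [ramp, min_le_of_right_le this]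
  rcases hxb.lt_or_gt with hx' | hx'
  · rw [indicator_of_mem (show x ∈ Ioo a (a + δ) from ⟨hx, hx'⟩)]
    have hlin : HasDerivAt (fun y => (y - a) / δ) δ⁻¹ x := by
      simpa [div_eq_mul_inv] using ((hasDerivAt_id x).sub_const a).div_const δ
    refine hlin.congr_of_eventuallyEq ?_
    filter_upwards [Ioo_mem_nhds hx hx'] with y hy
    have h0 : 0 ≤ (y - a) / δ := div_nonneg (by linarith [hy.1]) hδ.le
    have h1 : (y - a) / δ ≤ 1 := (div_le_one hδ).2 (by linarith [hy.2])
    simp [ramp, min_eq_right h1, max_eq_right h0]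
  · rw [indicator_of_notMem (fun h => hx'.not_gt h.2)]
    refine (hasDerivAt_const x 1).congr_of_eventuallyEq ?_
    filter_upwards [Ioi_mem_nhds hx'] with y (hy : a + δ < y)
    have : 1 ≤ (y - a) / δ := (le_div_iff₀ hδ).2 (by linarith)
    simp [ramp, min_eq_left this]

theorem ae_hasDerivAt_ramp (a : ℝ) {δ : ℝ} (hδ : 0 < δ) :
    ∀ᵐ x, HasDerivAt (ramp a δ) ((Ioo a (a + δ)).indicator (fun _ => δ⁻¹) x) x := by
  have hkinks : ∀ᵐ x, x ∉ ({a, a + δ} : Set ℝ) :=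
    measure_eq_zero_iff_ae_notMem.1 ((toFinite _).measure_zero _)
  filter_upwards [hkinks] with x hx
  simp only [mem_insert_iff, mem_singleton_iff, not_or] at hx
  exact hasDerivAt_ramp hδ hx.1 hx.2

theorem integral_indicator_Ioo_mul {a b lo hi c : ℝ} (g : ℝ → ℝ) (hab : a ≤ b)
    (hlo : lo ≤ a) (hhi : b ≤ hi) :
    ∫ x in lo..hi, (Ioo a b).indicator (fun _ => c) x * g x = c * ∫ x in a..b, g x := by
  have hsub : Ioc lo hi ∩ Ioo a b = Ioo a b :=
    inter_eq_self_of_subset_right fun x hx => ⟨hlo.trans_lt hx.1, hx.2.le.trans hhi⟩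
  simp_rw [← indicator_mul_left]
  rw [intervalIntegral.integral_of_le (hlo.trans (hab.trans hhi)),
    setIntegral_indicator measurableSet_Ioo, hsub, ← integral_Ioc_eq_integral_Ioo,
    ← intervalIntegral.integral_of_le hab, intervalIntegral.integral_const_mul]

theorem intervalIntegrable_indicator_Ioo_mul {a b lo hi c : ℝ} {g : ℝ → ℝ}
    (hg : IntervalIntegrable g volume a b) (hab : a ≤ b) :
    IntervalIntegrable (fun x => (Ioo a b).indicator (fun _ => c) x * g x) volume lo hi := by
  simp_rw [← indicator_mul_left]
  rw [intervalIntegrable_iff]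
  refine (integrable_indicator_iff measurableSet_Ioo).2 ?_ |>.integrableOn
  exact ((intervalIntegrable_iff_integrableOn_Ioo_of_le hab).1 hg).const_mul c

theorem integral_deriv_sum_ramp_mul {ι : Type*} [Fintype ι] {a c : ι → ℝ} {g : ℝ → ℝ}
    {δ lo hi : ℝ} (hδ : 0 < δ) (hlo : ∀ i, lo ≤ a i) (hhi : ∀ i, a i + δ ≤ hi)
    (hg : ∀ i, IntervalIntegrable g volume (a i) (a i + δ)) :
    ∫ x in lo..hi, deriv (fun y => ∑ i, c i * ramp (a i) δ y) x * g x =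
      ∑ i, c i * (δ⁻¹ * ∫ x in a i..a i + δ, g x) := by
  have hderiv : ∀ᵐ x, deriv (fun y => ∑ i, c i * ramp (a i) δ y) x * g x =
      ∑ i, c i * ((Ioo (a i) (a i + δ)).indicator (fun _ => δ⁻¹) x * g x) := by
    filter_upwards [ae_all_iff.2 fun i => ae_hasDerivAt_ramp (a i) hδ] with x hx
    rw [(HasDerivAt.fun_sum fun i _ => (hx i).const_mul (c i)).deriv, Finset.sum_mul]
    simp only [mul_assoc]
  have hle : ∀ i, a i ≤ a i + δ := fun i => le_add_of_nonneg_right hδ.le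
  rw [intervalIntegral.integral_congr_ae (hderiv.mono fun x hx _ => hx),
    intervalIntegral.integral_finsetSum fun i _ =>
      (intervalIntegrable_indicator_Ioo_mul (hg i) (hle i)).const_mul (c i)]
  refine Finset.sum_congr rfl fun i _ => ?_
  rw [intervalIntegral.integral_const_mul, integral_indicator_Ioo_mul g (hle i) (hlo i) (hhi i)]

theorem tendsto_inv_mul_integral_nhdsGT {g : ℝ → ℝ} {U : Set ℝ} {a : ℝ}
    (hg : ContinuousOn g U) (hU : IsOpen U) (ha : a ∈ U) :
    Tendsto (fun δ => δ⁻¹ * ∫ x in a..a + δ, g x) (𝓝[>] 0) (𝓝 (g a)) := by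
  have hFTC := intervalIntegral.integral_hasDerivAt_right (IntervalIntegrable.refl (a := a))
    (hg.stronglyMeasurableAtFilter hU a ha) (hg.continuousAt (hU.mem_nhds ha))
  simpa using (hasDerivAt_iff_tendsto_slope_zero.1 hFTC).mono_left (nhdsGT_le_nhdsNE 0)

theorem scottBlair_boltzmann_superposition_general
    (α 𝔼 : ℝ)
    (m : ℕ) (τ Δε : Fin m → ℝ)
    (hτ0 : ∀ i, 0 ≤ τ i)
    (t : ℝ) (ht : ∀ i, τ i < t) :
    Tendsto
      (fun δ : ℝ =>
        (𝔼 / Real.Gamma (1 - α)) *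
          ∫ s in (0:ℝ)..t,
            deriv (fun s' => ∑ i, Δε i * max 0 (min 1 ((s' - τ i) / δ))) s *
              (t - s) ^ (-α))
      (𝓝[>] (0:ℝ))
      (𝓝 (∑ i, Δε i * (𝔼 * (t - τ i) ^ (-α) / Real.Gamma (1 - α)))) := by
  set g : ℝ → ℝ := fun s => (t - s) ^ (-α)
  have hg : ContinuousOn g (Iio t) := fun s hs =>
    ((continuousAt_const.sub continuousAt_id).rpow_const
      (Or.inl (sub_ne_zero.2 (ne_of_gt hs)))).continuousWithinAt
  have hsmall : ∀ᶠ δ in 𝓝[>] (0:ℝ), 0 < δ ∧ ∀ i, τ i + δ < t :=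
    Filter.Eventually.and self_mem_nhdsWithin <| eventually_all.2 fun i =>
      Filter.mem_of_superset (nhdsWithin_le_nhds (Iio_mem_nhds (sub_pos.2 (ht i))))
        fun δ (hδ : δ < t - τ i) => show τ i + δ < t by linarith
  have hstress : ∀ᶠ δ in 𝓝[>] (0:ℝ),
      (𝔼 / Real.Gamma (1 - α)) * ∑ i, Δε i * (δ⁻¹ * ∫ s in τ i..τ i + δ, g s) =
      (𝔼 / Real.Gamma (1 - α)) *
        ∫ s in (0:ℝ)..t, deriv (fun s' => ∑ i, Δε i * ramp (τ i) δ s') s * g s := by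
    filter_upwards [hsmall] with δ ⟨hδ, hδt⟩
    rw [integral_deriv_sum_ramp_mul hδ hτ0 (fun i => (hδt i).le) fun i =>
      (hg.mono fun s hs => hs.2.trans_lt (max_lt (ht i) (hδt i))).intervalIntegrable]
  have hlimit : ∑ i, Δε i * (𝔼 * (t - τ i) ^ (-α) / Real.Gamma (1 - α)) =
      (𝔼 / Real.Gamma (1 - α)) * ∑ i, Δε i * g (τ i) := by
    rw [Finset.mul_sum]
    exact Finset.sum_congr rfl fun i _ => by ring
  rw [hlimit]
  exact ((tendsto_finsetSum Finset.univ fun i _ =>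
    (tendsto_inv_mul_integral_nhdsGT hg isOpen_Iio (ht i)).const_mul (Δε i)).const_mul
      (𝔼 / Real.Gamma (1 - α))).congr' hstress

/-- Boltzmann superposition for the Scott–Blair element under consecutive step
strains: with step times `0 ≤ τ₁ < ⋯ < τ_m < t`, strain increments `Δε_i`, and
ramp strain `ε_δ(s) = Σ_i Δε_i · r((s − τ_i)/δ)` where
`r(x) = max 0 (min 1 x)`, the Scott–Blair stress
`(𝔼/Γ(1−α)) ∫₀ᵗ ε_δ'(s)(t−s)^(−α) ds` tends, as `δ → 0⁺`, to
`Σ_i Δε_i · 𝔼 (t−τ_i)^(−α)/Γ(1−α)`, the superposition of the relaxation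
responses `G^SB(t − τ_i)`. -/
theorem scottBlair_boltzmann_superposition
    (α 𝔼 : ℝ) (hα : 0 < α) (hα1 : α < 1) (h𝔼 : 0 < 𝔼)
    (m : ℕ) (hm : 0 < m) (τ Δε : Fin m → ℝ)
    (hτ0 : ∀ i, 0 ≤ τ i) (hτmono : StrictMono τ)
    (t : ℝ) (ht : ∀ i, τ i < t) :
    Tendsto
      (fun δ : ℝ =>
        (𝔼 / Real.Gamma (1 - α)) *
          ∫ s in (0:ℝ)..t,
            deriv (fun s' => ∑ i, Δε i * max 0 (min 1 ((s' - τ i) / δ))) s *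
              (t - s) ^ (-α))
      (𝓝[>] (0:ℝ))
      (𝓝 (∑ i, Δε i * (𝔼 * (t - τ i) ^ (-α) / Real.Gamma (1 - α)))) :=
  scottBlair_boltzmann_superposition_general α 𝔼 m τ Δε hτ0 t ht
end

section
/- Let 0 < α₁ < α₂ < 1 and 𝔼₁, 𝔼₂ > 0, and let G^FKV(t) = 𝔼₁ t^(−α₁)/Γ(1−α₁) + 𝔼₂ t^(−α₂)/Γ(1−α₂). Then the negative logarithmic slope β(t) := −t · (d/dt) log G^FKV(t) is strictly decreasing on (0,∞), with lim_{t→0⁺} β(t) = α₂ and lim_{t→∞} β(t) = α₁; i.e., the FKV relaxation transitions monotonically from a faster power-law slope α₂ to a slower power-law slope α₁. -/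
open Set Filter Topology

/-- Monotone transition of the logarithmic slope of the fractional
Kelvin–Voigt relaxation function `G^FKV(t) = 𝔼₁ t^(−α₁)/Γ(1−α₁) +
𝔼₂ t^(−α₂)/Γ(1−α₂)` with `0 < α₁ < α₂ < 1`: the negative logarithmic slope
`β(t) = −t·(d/dt) log G^FKV(t)` is strictly decreasing on `(0,∞)`, with
`β(t) → α₂` as `t → 0⁺` and `β(t) → α₁` as `t → ∞`. -/
theorem fkv_log_slope_monotone_transition
    (α₁ α₂ 𝔼₁ 𝔼₂ : ℝ) (h0 : 0 < α₁) (h12 : α₁ < α₂) (h1 : α₂ < 1)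
    (h𝔼₁ : 0 < 𝔼₁) (h𝔼₂ : 0 < 𝔼₂)
    (G β : ℝ → ℝ)
    (hG : ∀ t > (0:ℝ), G t = 𝔼₁ * t ^ (-α₁) / Real.Gamma (1 - α₁)
      + 𝔼₂ * t ^ (-α₂) / Real.Gamma (1 - α₂))
    (hβ : ∀ t > (0:ℝ), β t = -t * deriv (fun s => Real.log (G s)) t) :
    StrictAntiOn β (Ioi (0:ℝ))
    ∧ Tendsto β (𝓝[>] (0:ℝ)) (𝓝 α₂)
    ∧ Tendsto β atTop (𝓝 α₁) := by
  have hδ : 0 < α₂ - α₁ := sub_pos.mpr h12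
  set δ : ℝ := α₂ - α₁ with hδdef
  have hΓ₁ : 0 < Real.Gamma (1 - α₁) := Real.Gamma_pos_of_pos (by linarith)
  have hΓ₂ : 0 < Real.Gamma (1 - α₂) := Real.Gamma_pos_of_pos (by linarith)
  set c₁ : ℝ := 𝔼₁ / Real.Gamma (1 - α₁) with hc₁def
  set c₂ : ℝ := 𝔼₂ / Real.Gamma (1 - α₂) with hc₂def
  have hc₁ : 0 < c₁ := div_pos h𝔼₁ hΓ₁
  have hc₂ : 0 < c₂ := div_pos h𝔼₂ hΓ₂
  have key : ∀ t ∈ Ioi (0:ℝ), β t = α₁ + δ * c₂ / (c₁ * t ^ δ + c₂) := by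
    intro t ht
    have ht : (0:ℝ) < t := ht
    have htne : t ≠ 0 := ht.ne'
    have hP : (0:ℝ) < c₁ * t ^ (-α₁) + c₂ * t ^ (-α₂) :=
      add_pos (mul_pos hc₁ (Real.rpow_pos_of_pos ht _))
        (mul_pos hc₂ (Real.rpow_pos_of_pos ht _))
    have hd : HasDerivAt (fun s : ℝ => c₁ * s ^ (-α₁) + c₂ * s ^ (-α₂))
        (c₁ * (-α₁ * t ^ (-α₁ - 1)) + c₂ * (-α₂ * t ^ (-α₂ - 1))) t :=
      ((Real.hasDerivAt_rpow_const (Or.inl htne)).const_mul c₁).add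
        ((Real.hasDerivAt_rpow_const (Or.inl htne)).const_mul c₂)
    have hlog : HasDerivAt (fun s : ℝ => Real.log (c₁ * s ^ (-α₁) + c₂ * s ^ (-α₂)))
        ((c₁ * (-α₁ * t ^ (-α₁ - 1)) + c₂ * (-α₂ * t ^ (-α₂ - 1))) /
          (c₁ * t ^ (-α₁) + c₂ * t ^ (-α₂))) t :=
      hd.log hP.ne'
    have heq : (fun s => Real.log (G s)) =ᶠ[𝓝 t]
        (fun s => Real.log (c₁ * s ^ (-α₁) + c₂ * s ^ (-α₂))) := by
      filter_upwards [Ioi_mem_nhds ht] with s hs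
      rw [hG s hs]
      congr 1
      rw [hc₁def, hc₂def]; ring
    rw [hβ t ht, heq.deriv_eq, hlog.deriv]
    have e1 : t ^ (-α₁) = t ^ δ * t ^ (-α₂) := by
      rw [← Real.rpow_add ht]; congr 1; ring
    have e2 : t ^ (-α₁ - 1) = t ^ δ * t ^ (-α₂) / t := by
      rw [← e1, Real.rpow_sub ht, Real.rpow_one]
    have e3 : t ^ (-α₂ - 1) = t ^ (-α₂) / t := by
      rw [Real.rpow_sub ht, Real.rpow_one]
    have ha : (0:ℝ) < t ^ (-α₂) := Real.rpow_pos_of_pos ht _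
    have hu : (0:ℝ) < t ^ δ := Real.rpow_pos_of_pos ht _
    have hden1 : c₁ * (t ^ δ * t ^ (-α₂)) + c₂ * t ^ (-α₂) ≠ 0 := by positivity
    have hden2 : c₁ * t ^ δ + c₂ ≠ 0 := by positivity
    rw [e1, e2, e3]
    field_simp
    ring
  refine ⟨?_, ?_, ?_⟩
  · intro s hs t ht hst
    rw [key s hs, key t ht]
    have hs' : (0:ℝ) < s := hs
    have hlt : s ^ δ < t ^ δ := Real.rpow_lt_rpow hs'.le hst hδ
    have h1 : 0 < c₁ * s ^ δ + c₂ :=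
      add_pos (mul_pos hc₁ (Real.rpow_pos_of_pos hs' _)) hc₂
    have h2 : c₁ * s ^ δ + c₂ < c₁ * t ^ δ + c₂ := by nlinarith
    have := div_lt_div_of_pos_left (mul_pos hδ hc₂) h1 h2
    linarith
  · have hcont : ContinuousAt (fun t : ℝ => α₁ + δ * c₂ / (c₁ * t ^ δ + c₂)) 0 := by
      have hrc : ContinuousAt (fun t : ℝ => t ^ δ) 0 :=
        Real.continuousAt_rpow_const 0 δ (Or.inr hδ.le)
      have hden : c₁ * (0:ℝ) ^ δ + c₂ ≠ 0 := by
        rw [Real.zero_rpow hδ.ne']; positivity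
      exact continuousAt_const.add
        (continuousAt_const.div ((hrc.const_smul c₁).add continuousAt_const) hden)
    have hval : α₁ + δ * c₂ / (c₁ * (0:ℝ) ^ δ + c₂) = α₂ := by
      rw [Real.zero_rpow hδ.ne']
      field_simp
      ring
    have hlim : Tendsto (fun t : ℝ => α₁ + δ * c₂ / (c₁ * t ^ δ + c₂)) (𝓝[>] 0) (𝓝 α₂) := by
      rw [← hval]
      exact (hcont.tendsto).mono_left nhdsWithin_le_nhds
    refine hlim.congr' ?_
    filter_upwards [self_mem_nhdsWithin] with t ht
    exact (key t ht).symm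
  · have h1 : Tendsto (fun t : ℝ => c₁ * t ^ δ + c₂) atTop atTop :=
      tendsto_atTop_add_const_right _ c₂ ((tendsto_rpow_atTop hδ).const_mul_atTop hc₁)
    have h2 : Tendsto (fun t : ℝ => α₁ + δ * c₂ / (c₁ * t ^ δ + c₂)) atTop (𝓝 (α₁ + 0)) :=
      tendsto_const_nhds.add (Tendsto.div_atTop tendsto_const_nhds h1)
    rw [add_zero] at h2
    refine h2.congr' ?_
    filter_upwards [eventually_gt_atTop (0:ℝ)] with t ht
    exact (key t ht).symm
end
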